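/- Weak lower semicontinuity of the energy: let (fₙ,φₙ) be a sequence of admissible pairs, let f₀ : ℝ³×ℝ³ → ℝ be measurable, nonnegative a.e. and in L^{1+1/k}, and let φ₀ be a potential with φ₀ ≤ 0 a.e. Assume: (i) fₙ converges to f₀ weakly in L^{1+1/k}, i.e. ∫∫ fₙ g dp dx → ∫∫ f₀ g dp dx for every g ∈ L^{1+k}(ℝ⁶); (ii) φₙ(x) → φ₀(x) for almost every x ∈ ℝ³; (iii) ∇φₙ converges to ∇φ₀ weakly in L²(ℝ³;ℝ³). Then liminf_{n→∞} 𝓔(fₙ,φₙ) ≥ 𝓔(f₀,φ₀). -/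

import Mathlib

/-!
The energy is the kinetic term plus half the Dirichlet integral, and each part is weakly lower
semicontinuous on its own. For the Dirichlet part this is the pointwise bound
`‖u‖² ≥ 2⟪u, v⟫ - ‖v‖²`, integrated and passed to the weak limit in `L²`.

For the kinetic part, the weights `wₙ = √(e^{2φₙ(x)} + |p|²)` converge a.e. to `w₀`. Truncate `w₀`
to `g = 1_S min(w₀, R)` with `S` of finite measure; then `g ∈ L^{1+k}` is a legitimate test
function for the weak convergence `fₙ ⇀ f₀`, and `g ≤ wₙ + eₙ` with `eₙ = 1_S min(R, (w₀ - wₙ)⁺)`.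
By bounded convergence `eₙ → 0` in `L^{1+k}`, so by Hölder `∫ fₙ eₙ → 0` since the `fₙ` are bounded
in `L^{1+1/k}`; hence `∫ f₀ g ≤ liminf ∫ wₙ fₙ`. Monotone convergence in `R` and `S` removes the
truncation.
-/

open MeasureTheory Real Filter Topology
open scoped ENNReal

noncomputable section

/-- Euclidean 3-space. -/
abbrev E3 := EuclideanSpace ℝ (Fin 3)

/-- `φ` belongs to (a C¹ surrogate of) the space `D¹(ℝ³)`: it is continuously
differentiable, its gradient is square integrable and it vanishes at infinity in
the sense that `{|φ| > a}` has finite measure for every `a > 0`. -/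
def IsPotential (φ : E3 → ℝ) : Prop :=
  ContDiff ℝ 1 φ ∧ (∫⁻ x : E3, ENNReal.ofReal (‖gradient φ x‖ ^ 2)) < ⊤ ∧
    ∀ a : ℝ, 0 < a → volume {x : E3 | a < |φ x|} < ⊤

/-- `f ∈ Γ^k_{M,J}`: `f` is measurable, a.e. nonnegative, with `‖f‖_{L¹} = M` and
`‖f‖_{L^{1+1/k}} ≤ J` (in particular `f ∈ L¹ ∩ L^{1+1/k}`). -/
def InGamma (k M J : ℝ) (f : E3 → E3 → ℝ) : Prop :=
  Measurable (Function.uncurry f) ∧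
  (∀ᵐ z : E3 × E3, 0 ≤ f z.1 z.2) ∧
  (∫⁻ z : E3 × E3, ENNReal.ofReal (f z.1 z.2)) = ENNReal.ofReal M ∧
  eLpNorm (Function.uncurry f) (ENNReal.ofReal (1 + 1/k)) volume ≤ ENNReal.ofReal J

/-- Kinetic energy `E_kin(f,φ) = ∫∫ √(e^{2φ(x)}+|p|²) f(x,p) dp dx` (value in `[0,∞]`). -/
def kinE (f : E3 → E3 → ℝ) (φ : E3 → ℝ) : ℝ≥0∞ :=
  ∫⁻ z : E3 × E3, ENNReal.ofReal (Real.sqrt (Real.exp (2 * φ z.1) + ‖z.2‖ ^ 2) * f z.1 z.2)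

/-- Energy functional `𝓔(f,φ) = E_kin(f,φ) + (1/2)∫ |∇φ|²` (value in `[0,∞]`). -/
def energy (f : E3 → E3 → ℝ) (φ : E3 → ℝ) : ℝ≥0∞ :=
  kinE f φ + (∫⁻ x : E3, ENNReal.ofReal (‖gradient φ x‖ ^ 2)) / 2

/-- `(f,φ)` is admissible: `f ∈ Γ^k_{M,J}`, `φ` is a potential and
`∫∫ √(1+|p|²) f dp dx < ∞`. -/
def Admissible (k M J : ℝ) (f : E3 → E3 → ℝ) (φ : E3 → ℝ) : Prop :=
  InGamma k M J f ∧ IsPotential φ ∧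
  (∫⁻ z : E3 × E3, ENNReal.ofReal (Real.sqrt (1 + ‖z.2‖ ^ 2) * f z.1 z.2)) < ⊤

/-- The energy infimum `I^k_{M,J} = inf {𝓔(f,φ) : (f,φ) admissible}`. -/
def energyInf (k M J : ℝ) : ℝ≥0∞ :=
  sInf { e : ℝ≥0∞ | ∃ f φ, Admissible k M J f φ ∧ e = energy f φ }

theorem ENNReal.le_liminf_add {ι : Type*} {l : Filter ι} (u v : ι → ℝ≥0∞) :
    liminf u l + liminf v l ≤ liminf (u + v) l := by
  simp only [liminf_eq_iSup_iInf]
  refine biSup_add_biSup_le' ⟨_, univ_mem⟩ ⟨_, univ_mem⟩ fun s hs t ht => ?_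
  refine le_iSup₂_of_le (s ∩ t) (inter_mem hs ht) (le_iInf₂ fun i hi => ?_)
  exact add_le_add (iInf₂_le i hi.1) (iInf₂_le i hi.2)

theorem min_le_add_min_max_sub {a b R : ℝ} (hb : 0 ≤ b) : min a R ≤ b + min R (max (a - b) 0) := by
  rcases le_total R (max (a - b) 0) with h | h
  · rw [min_eq_left h]
    linarith [min_le_right a R]
  · rw [min_eq_right h]
    linarith [min_le_left a R, le_max_left (a - b) 0]

section

variable {α : Type*} [MeasurableSpace α] {μ : Measure α}

theorem ofReal_integral_le_lintegral_ofReal {f : α → ℝ} (hf : Integrable f μ) :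
    ENNReal.ofReal (∫ x, f x ∂μ) ≤ ∫⁻ x, ENNReal.ofReal (f x) ∂μ := by
  calc ENNReal.ofReal (∫ x, f x ∂μ) ≤ ENNReal.ofReal (∫ x, max (f x) 0 ∂μ) :=
        ENNReal.ofReal_le_ofReal (integral_mono hf hf.pos_part fun x => le_max_left _ _)
    _ = ∫⁻ x, ENNReal.ofReal (f x) ∂μ := by
        rw [ofReal_integral_eq_lintegral_ofReal hf.pos_part (ae_of_all _ fun x => le_max_right _ _)]
        simp only [ENNReal.ofReal_max, ENNReal.ofReal_zero, zero_le, sup_of_le_left]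

theorem lintegral_ofReal_mul_le_eLpNorm_mul_eLpNorm {p q : ℝ≥0∞} [p.HolderConjugate q]
    {f e : α → ℝ} (hf : AEStronglyMeasurable f μ) (he : AEStronglyMeasurable e μ) :
    ∫⁻ x, ENNReal.ofReal (e x * f x) ∂μ ≤ eLpNorm f p μ * eLpNorm e q μ :=
  calc ∫⁻ x, ENNReal.ofReal (e x * f x) ∂μ ≤ ∫⁻ x, ‖(f • e) x‖ₑ ∂μ :=
        lintegral_mono fun x => by
          rw [← ofReal_norm]
          exact ENNReal.ofReal_le_ofReal ((le_abs_self _).trans_eq (by simp [mul_comm]))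
    _ = eLpNorm (f • e) 1 μ := eLpNorm_one_eq_lintegral_enorm.symm
    _ ≤ eLpNorm f p μ * eLpNorm e q μ := eLpNorm_smul_le_mul_eLpNorm he hf

theorem tendsto_eLpNorm_zero_of_tendsto_ae_of_bound [IsFiniteMeasure μ] {E : Type*}
    [NormedAddCommGroup E] {q : ℝ≥0∞} (hq₀ : q ≠ 0) (hq : q ≠ ∞) {e : ℕ → α → E} {R : ℝ}
    (he : ∀ n, AEStronglyMeasurable (e n) μ) (hbound : ∀ n, ∀ᵐ x ∂μ, ‖e n x‖ ≤ R)
    (hlim : ∀ᵐ x ∂μ, Tendsto (fun n => e n x) atTop (𝓝 0)) :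
    Tendsto (fun n => eLpNorm (e n) q μ) atTop (𝓝 0) := by
  have hq' : 0 < q.toReal := ENNReal.toReal_pos hq₀ hq
  have hint : Tendsto (fun n => ∫⁻ x, ‖e n x‖ₑ ^ q.toReal ∂μ) atTop (𝓝 0) := by
    rw [← lintegral_zero]
    refine tendsto_lintegral_of_dominated_convergence' (fun _ => ENNReal.ofReal R ^ q.toReal)
      (fun n => (he n).enorm.pow_const _) (fun n => ?_) ?_ ?_
    · filter_upwards [hbound n] with x hx
      rw [← ofReal_norm]
      gcongr
    · rw [lintegral_const]
      exact ENNReal.mul_ne_top (ENNReal.rpow_ne_top_of_nonneg hq'.le ENNReal.ofReal_ne_top)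
        (measure_ne_top _ _)
    · filter_upwards [hlim] with x hx
      have h₀ : Tendsto (fun n => ‖e n x‖ₑ) atTop (𝓝 0) := by
        simpa [Function.comp_def] using (continuous_enorm.tendsto (0 : E)).comp hx
      simpa [Function.comp_def, ENNReal.zero_rpow_of_pos hq'] using
        ((ENNReal.continuous_rpow_const (y := q.toReal)).tendsto 0).comp h₀
  simp_rw [eLpNorm_eq_lintegral_rpow_enorm_toReal hq₀ hq]
  simpa [Function.comp_def, ENNReal.zero_rpow_of_pos (inv_pos.2 hq')] using
    ((ENNReal.continuous_rpow_const (y := 1 / q.toReal)).tendsto 0).comp hint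

theorem ofReal_integral_mul_le_liminf_of_le_add {p q : ℝ≥0∞} [p.HolderConjugate q]
    {C : ℝ≥0∞} (hC : C ≠ ∞) {f : ℕ → α → ℝ} {f₀ : α → ℝ}
    (hf : ∀ n, AEStronglyMeasurable (f n) μ) (hfC : ∀ n, eLpNorm (f n) p μ ≤ C)
    {g : α → ℝ} (hg : MemLp g q μ) (hg_nonneg : ∀ x, 0 ≤ g x)
    (hweak : Tendsto (fun n => ∫ x, f n x * g x ∂μ) atTop (𝓝 (∫ x, f₀ x * g x ∂μ)))
    {w e : ℕ → α → ℝ} (he : ∀ n, AEStronglyMeasurable (e n) μ)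
    (he_lim : Tendsto (fun n => eLpNorm (e n) q μ) atTop (𝓝 0))
    (hle : ∀ n x, g x ≤ w n x + e n x) :
    ENNReal.ofReal (∫ x, f₀ x * g x ∂μ) ≤
      liminf (fun n => ∫⁻ x, ENNReal.ofReal (w n x * f n x) ∂μ) atTop := by
  have hpoint : ∀ n x, ENNReal.ofReal (f n x * g x) ≤
      ENNReal.ofReal (w n x * f n x) + ENNReal.ofReal (e n x * f n x) := fun n x => by
    rcases le_or_gt 0 (f n x) with hfx | hfx
    · refine (ENNReal.ofReal_le_ofReal ?_).trans ENNReal.ofReal_add_le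
      nlinarith [hle n x]
    · simp [ENNReal.ofReal_eq_zero.2 (mul_nonpos_of_nonpos_of_nonneg hfx.le (hg_nonneg x))]
  have hstep : ∀ n, ENNReal.ofReal (∫ x, f n x * g x ∂μ) ≤
      (∫⁻ x, ENNReal.ofReal (w n x * f n x) ∂μ) + C * eLpNorm (e n) q μ := fun n =>
    calc ENNReal.ofReal (∫ x, f n x * g x ∂μ) ≤ ∫⁻ x, ENNReal.ofReal (f n x * g x) ∂μ :=
          ofReal_integral_le_lintegral_ofReal
            (MemLp.integrable_mul ⟨hf n, (hfC n).trans_lt hC.lt_top⟩ hg)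
      _ ≤ ∫⁻ x, (ENNReal.ofReal (w n x * f n x) + ENNReal.ofReal (e n x * f n x)) ∂μ :=
          lintegral_mono (hpoint n)
      _ = (∫⁻ x, ENNReal.ofReal (w n x * f n x) ∂μ) +
            ∫⁻ x, ENNReal.ofReal (e n x * f n x) ∂μ :=
          lintegral_add_right' _ ((he n).aemeasurable.mul (hf n).aemeasurable).ennreal_ofReal
      _ ≤ _ := by
          grw [lintegral_ofReal_mul_le_eLpNorm_mul_eLpNorm (p := p) (q := q) (hf n) (he n), hfC n]
  have hrest : Tendsto (fun n => C * eLpNorm (e n) q μ) atTop (𝓝 0) := by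
    simpa using ENNReal.Tendsto.const_mul he_lim (Or.inr hC)
  calc ENNReal.ofReal (∫ x, f₀ x * g x ∂μ)
      = liminf (fun n => ENNReal.ofReal (∫ x, f n x * g x ∂μ)) atTop :=
        (ENNReal.tendsto_ofReal hweak).liminf_eq.symm
    _ ≤ liminf (fun n => (∫⁻ x, ENNReal.ofReal (w n x * f n x) ∂μ) +
          C * eLpNorm (e n) q μ) atTop :=
        liminf_le_liminf (.of_forall hstep)
    _ = _ := ENNReal.liminf_add_of_right_tendsto_zero hrest _

theorem lintegral_ofReal_indicator_min_mul_le_liminf {p q : ℝ≥0∞} [p.HolderConjugate q]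
    (hq : q ≠ ∞) {C : ℝ≥0∞} (hC : C ≠ ∞) {f : ℕ → α → ℝ} {f₀ : α → ℝ}
    (hf : ∀ n, AEStronglyMeasurable (f n) μ) (hfC : ∀ n, eLpNorm (f n) p μ ≤ C)
    (hf₀ : MemLp f₀ p μ) (hf₀_nonneg : 0 ≤ᵐ[μ] f₀)
    (hweak : ∀ g : α → ℝ, MemLp g q μ →
      Tendsto (fun n => ∫ x, f n x * g x ∂μ) atTop (𝓝 (∫ x, f₀ x * g x ∂μ)))
    {w : ℕ → α → ℝ} {w₀ : α → ℝ} (hw : ∀ n, AEStronglyMeasurable (w n) μ)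
    (hw_nonneg : ∀ n x, 0 ≤ w n x) (hw₀ : AEStronglyMeasurable w₀ μ) (hw₀_nonneg : ∀ x, 0 ≤ w₀ x)
    (hlim : ∀ᵐ x ∂μ, Tendsto (fun n => w n x) atTop (𝓝 (w₀ x)))
    {s : Set α} (hs : MeasurableSet s) (hμs : μ s ≠ ∞) {R : ℝ} (hR : 0 ≤ R) :
    ∫⁻ x, ENNReal.ofReal (s.indicator (fun x => min (w₀ x) R) x * f₀ x) ∂μ ≤
      liminf (fun n => ∫⁻ x, ENNReal.ofReal (w n x * f n x) ∂μ) atTop := by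
  have : IsFiniteMeasure (μ.restrict s) := isFiniteMeasure_restrict.2 hμs
  have hg_nonneg : ∀ x, 0 ≤ s.indicator (fun x => min (w₀ x) R) x :=
    Set.indicator_nonneg fun x _ => le_min (hw₀_nonneg x) hR
  have hg_mem : MemLp (s.indicator fun x => min (w₀ x) R) q μ := by
    refine (memLp_indicator_iff_restrict hs).2 <| MemLp.of_bound
      (hw₀.aemeasurable.min aemeasurable_const).aestronglyMeasurable.restrict R
      (ae_of_all _ fun x => ?_)
    rw [Real.norm_of_nonneg (le_min (hw₀_nonneg x) hR)]
    exact min_le_right _ _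
  have he_meas : ∀ n, AEStronglyMeasurable (fun x => min R (max (w₀ x - w n x) 0)) μ := fun n =>
    (aemeasurable_const.min ((hw₀.aemeasurable.sub (hw n).aemeasurable).max
      aemeasurable_const)).aestronglyMeasurable
  have he_lim : Tendsto (fun n => eLpNorm (s.indicator fun x => min R (max (w₀ x - w n x) 0)) q μ)
      atTop (𝓝 0) := by
    simp only [eLpNorm_indicator_eq_eLpNorm_restrict hs]
    refine tendsto_eLpNorm_zero_of_tendsto_ae_of_bound (ENNReal.HolderConjugate.ne_zero q p) hq
      (R := R) (fun n => (he_meas n).restrict) (fun n => ae_of_all _ fun x => ?_)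
      (ae_restrict_of_ae (hlim.mono fun x hx => ?_))
    · rw [Real.norm_of_nonneg (le_min hR (le_max_right _ _))]
      exact min_le_left _ _
    · simpa [min_eq_right hR] using
        (tendsto_const_nhds.min ((tendsto_const_nhds.sub hx).max tendsto_const_nhds) :
          Tendsto _ atTop (𝓝 (min R (max (w₀ x - w₀ x) 0))))
  have hle : ∀ n x, s.indicator (fun x => min (w₀ x) R) x ≤
      w n x + s.indicator (fun x => min R (max (w₀ x - w n x) 0)) x := by
    intro n x
    by_cases hx : x ∈ s
    · simpa only [Set.indicator_of_mem hx] using min_le_add_min_max_sub (hw_nonneg n x)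
    · simpa [Set.indicator_of_notMem hx] using hw_nonneg n x
  calc ∫⁻ x, ENNReal.ofReal (s.indicator (fun x => min (w₀ x) R) x * f₀ x) ∂μ
      = ENNReal.ofReal (∫ x, f₀ x * s.indicator (fun x => min (w₀ x) R) x ∂μ) := by
        rw [ofReal_integral_eq_lintegral_ofReal
          (f := fun x => f₀ x * s.indicator (fun x => min (w₀ x) R) x)
          (hf₀.integrable_mul hg_mem) (hf₀_nonneg.mono fun x hx => mul_nonneg hx (hg_nonneg x))]
        simp_rw [mul_comm]
    _ ≤ _ := ofReal_integral_mul_le_liminf_of_le_add hC hf hfC hg_mem hg_nonneg (hweak _ hg_mem)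
        (fun n => (he_meas n).indicator hs) he_lim hle

theorem lintegral_ofReal_mul_le_liminf_of_weak [SigmaFinite μ] {p q : ℝ≥0∞}
    [p.HolderConjugate q] (hq : q ≠ ∞) {C : ℝ≥0∞} (hC : C ≠ ∞) {f : ℕ → α → ℝ} {f₀ : α → ℝ}
    (hf : ∀ n, AEStronglyMeasurable (f n) μ) (hfC : ∀ n, eLpNorm (f n) p μ ≤ C)
    (hf₀ : MemLp f₀ p μ) (hf₀_nonneg : 0 ≤ᵐ[μ] f₀)
    (hweak : ∀ g : α → ℝ, MemLp g q μ →
      Tendsto (fun n => ∫ x, f n x * g x ∂μ) atTop (𝓝 (∫ x, f₀ x * g x ∂μ)))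
    {w : ℕ → α → ℝ} {w₀ : α → ℝ} (hw : ∀ n, AEStronglyMeasurable (w n) μ)
    (hw_nonneg : ∀ n x, 0 ≤ w n x) (hw₀ : AEStronglyMeasurable w₀ μ) (hw₀_nonneg : ∀ x, 0 ≤ w₀ x)
    (hlim : ∀ᵐ x ∂μ, Tendsto (fun n => w n x) atTop (𝓝 (w₀ x))) :
    ∫⁻ x, ENNReal.ofReal (w₀ x * f₀ x) ∂μ ≤
      liminf (fun n => ∫⁻ x, ENNReal.ofReal (w n x * f n x) ∂μ) atTop := by
  obtain ⟨g, hg⟩ : ∃ g : ℕ → α → ℝ,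
      ∀ R, g R = (spanningSets μ R).indicator fun x => min (w₀ x) R := ⟨_, fun _ => rfl⟩
  have htrunc : ∀ R, ∫⁻ x, ENNReal.ofReal (g R x * f₀ x) ∂μ ≤
      liminf (fun n => ∫⁻ x, ENNReal.ofReal (w n x * f n x) ∂μ) atTop := by
    intro R
    rw [hg]
    exact lintegral_ofReal_indicator_min_mul_le_liminf hq hC hf hfC hf₀ hf₀_nonneg hweak hw
      hw_nonneg hw₀ hw₀_nonneg hlim (measurableSet_spanningSets μ R)
      (measure_spanningSets_lt_top μ R).ne R.cast_nonneg
  refine le_of_tendsto' (lintegral_tendsto_of_tendsto_of_monotone (fun R => ?_) ?_ ?_) htrunc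
  · rw [hg]
    exact (((hw₀.aemeasurable.min aemeasurable_const).indicator
      (measurableSet_spanningSets μ R)).mul hf₀.1.aemeasurable).ennreal_ofReal
  · filter_upwards [hf₀_nonneg] with x hx R₁ R₂ hR
    refine ENNReal.ofReal_le_ofReal (mul_le_mul_of_nonneg_right ?_ hx)
    rw [hg, hg]
    exact (Set.indicator_le_indicator_of_subset (monotone_spanningSets μ hR)
      (fun x => le_min (hw₀_nonneg x) R₁.cast_nonneg) x).trans
        (Set.indicator_le_indicator (min_le_min_left _ (Nat.cast_le.2 hR)))
  · refine ae_of_all _ fun x => tendsto_const_nhds.congr' ?_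
    filter_upwards [eventually_ge_atTop (spanningSetsIndex μ x),
      eventually_ge_atTop ⌈w₀ x⌉₊] with R hxR hwR
    rw [hg, Set.indicator_of_mem (mem_spanningSets_of_index_le μ x hxR),
      min_eq_left ((Nat.le_ceil _).trans (Nat.cast_le.2 hwR))]

theorem memLp_two_of_lintegral_sq_norm_lt_top {F : Type*} [NormedAddCommGroup F] {f : α → F}
    (hf : AEStronglyMeasurable f μ) (h : ∫⁻ x, ENNReal.ofReal (‖f x‖ ^ 2) ∂μ < ∞) :
    MemLp f 2 μ :=
  (memLp_two_iff_integrable_sq_norm hf).2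
    ⟨hf.norm.pow 2, (hasFiniteIntegral_iff_ofReal (ae_of_all _ fun x => by positivity)).2 h⟩

theorem lintegral_sq_norm_le_liminf_of_tendsto_integral_inner {F : Type*} [NormedAddCommGroup F]
    [InnerProductSpace ℝ F] {g : ℕ → α → F} {g₀ : α → F}
    (hg : ∀ n, MemLp (g n) 2 μ) (hg₀ : MemLp g₀ 2 μ)
    (hweak : Tendsto (fun n => ∫ x, inner ℝ (g n x) (g₀ x) ∂μ) atTop
      (𝓝 (∫ x, inner ℝ (g₀ x) (g₀ x) ∂μ))) :
    ∫⁻ x, ENNReal.ofReal (‖g₀ x‖ ^ 2) ∂μ ≤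
      liminf (fun n => ∫⁻ x, ENNReal.ofReal (‖g n x‖ ^ 2) ∂μ) atTop := by
  have hinner : ∀ n, Integrable (fun x => inner ℝ (g n x) (g₀ x)) μ := fun n =>
    (L2.integrable_inner (𝕜 := ℝ) ((hg n).toLp _) (hg₀.toLp _)).congr <| by
      filter_upwards [(hg n).coeFn_toLp, hg₀.coeFn_toLp] with x h₁ h₂
      rw [h₁, h₂]
  have hsq₀ : Integrable (fun x => ‖g₀ x‖ ^ 2) μ := (memLp_two_iff_integrable_sq_norm hg₀.1).1 hg₀
  have hpoint : ∀ n x, 2 * inner ℝ (g n x) (g₀ x) - ‖g₀ x‖ ^ 2 ≤ ‖g n x‖ ^ 2 := fun n x => by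
    nlinarith [norm_sub_sq_real (g n x) (g₀ x), sq_nonneg ‖g n x - g₀ x‖]
  have hlim : Tendsto (fun n => ∫ x, (2 * inner ℝ (g n x) (g₀ x) - ‖g₀ x‖ ^ 2) ∂μ) atTop
      (𝓝 (∫ x, ‖g₀ x‖ ^ 2 ∂μ)) := by
    simp_rw [integral_sub ((hinner _).const_mul 2) hsq₀, integral_const_mul]
    convert (hweak.const_mul 2).sub_const (∫ x, ‖g₀ x‖ ^ 2 ∂μ) using 2
    simp_rw [real_inner_self_eq_norm_sq]
    ring
  calc ∫⁻ x, ENNReal.ofReal (‖g₀ x‖ ^ 2) ∂μ = ENNReal.ofReal (∫ x, ‖g₀ x‖ ^ 2 ∂μ) :=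
        (ofReal_integral_eq_lintegral_ofReal hsq₀ (ae_of_all _ fun x => by positivity)).symm
    _ = liminf (fun n => ENNReal.ofReal
          (∫ x, (2 * inner ℝ (g n x) (g₀ x) - ‖g₀ x‖ ^ 2) ∂μ)) atTop :=
        (ENNReal.tendsto_ofReal hlim).liminf_eq.symm
    _ ≤ liminf (fun n => ∫⁻ x, ENNReal.ofReal (‖g n x‖ ^ 2) ∂μ) atTop :=
        liminf_le_liminf <| .of_forall fun n =>
          (ofReal_integral_le_lintegral_ofReal (((hinner n).const_mul 2).sub hsq₀)).trans
            (lintegral_mono fun x => ENNReal.ofReal_le_ofReal (hpoint n x))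

end

theorem measurable_gradient {F : Type*} [NormedAddCommGroup F] [InnerProductSpace ℝ F]
    [CompleteSpace F] [MeasurableSpace F] [BorelSpace F] (φ : F → ℝ) :
    Measurable (gradient φ) :=
  (InnerProductSpace.toDual ℝ F).symm.continuous.measurable.comp (measurable_fderiv ℝ φ)

theorem IsPotential.memLp_gradient {φ : E3 → ℝ} (h : IsPotential φ) :
    MemLp (gradient φ) 2 volume :=
  memLp_two_of_lintegral_sq_norm_lt_top (measurable_gradient φ).aestronglyMeasurable h.2.1

theorem holderConjugate_one_add_one_div {k : ℝ} (hk : 0 < k) :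
    (1 + 1 / k).HolderConjugate (1 + k) := by
  rw [Real.holderConjugate_iff]
  refine ⟨by simp [hk], ?_⟩
  field_simp
  ring

theorem kinE_le_liminf_of_weak {k J : ℝ} (hk : 0 < k) {f : ℕ → E3 → E3 → ℝ} {φ : ℕ → E3 → ℝ}
    {f₀ : E3 → E3 → ℝ} {φ₀ : E3 → ℝ} (hf : ∀ n, Measurable (Function.uncurry (f n)))
    (hfJ : ∀ n, eLpNorm (Function.uncurry (f n)) (ENNReal.ofReal (1 + 1 / k)) volume ≤
      ENNReal.ofReal J)
    (hφ : ∀ n, Measurable (φ n))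
    (hf₀ : MemLp (Function.uncurry f₀) (ENNReal.ofReal (1 + 1 / k)) volume)
    (hf₀_nonneg : ∀ᵐ z : E3 × E3, 0 ≤ f₀ z.1 z.2) (hφ₀ : Measurable φ₀)
    (hweak : ∀ g : E3 × E3 → ℝ, MemLp g (ENNReal.ofReal (1 + k)) volume →
      Tendsto (fun n => ∫ z : E3 × E3, f n z.1 z.2 * g z) atTop
        (𝓝 (∫ z : E3 × E3, f₀ z.1 z.2 * g z)))
    (hlim : ∀ᵐ x : E3, Tendsto (fun n => φ n x) atTop (𝓝 (φ₀ x))) :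
    kinE f₀ φ₀ ≤ liminf (fun n => kinE (f n) (φ n)) atTop := by
  have := (holderConjugate_one_add_one_div hk).ennrealOfReal
  have hw : ∀ ψ : E3 → ℝ, Measurable ψ →
      Measurable fun z : E3 × E3 => √(exp (2 * ψ z.1) + ‖z.2‖ ^ 2) := fun ψ hψ => by fun_prop
  exact lintegral_ofReal_mul_le_liminf_of_weak ENNReal.ofReal_ne_top ENNReal.ofReal_ne_top
    (fun n => (hf n).aestronglyMeasurable) hfJ hf₀ hf₀_nonneg hweak
    (fun n => (hw _ (hφ n)).aestronglyMeasurable) (fun _ _ => Real.sqrt_nonneg _)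
    (hw _ hφ₀).aestronglyMeasurable (fun _ => Real.sqrt_nonneg _)
    (Measure.quasiMeasurePreserving_fst.ae hlim |>.mono fun z hz =>
      (((hz.const_mul 2).rexp).add_const _).sqrt)

theorem energy_weakly_lower_semicontinuous_general (k M J : ℝ)
    (hk : 0 < k)
    (f : ℕ → E3 → E3 → ℝ) (φ : ℕ → E3 → ℝ)
    (hadm : ∀ n, Admissible k M J (f n) (φ n))
    (f₀ : E3 → E3 → ℝ) (φ₀ : E3 → ℝ)
    (hf₀pos : ∀ᵐ z : E3 × E3, 0 ≤ f₀ z.1 z.2)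
    (hf₀Lp : MemLp (Function.uncurry f₀) (ENNReal.ofReal (1 + 1/k)) volume)
    (hφ₀ : IsPotential φ₀)
    (hweakf : ∀ g : E3 × E3 → ℝ, MemLp g (ENNReal.ofReal (1 + k)) volume →
      Tendsto (fun n => ∫ z : E3 × E3, f n z.1 z.2 * g z) atTop
        (nhds (∫ z : E3 × E3, f₀ z.1 z.2 * g z)))
    (haeφ : ∀ᵐ x : E3, Tendsto (fun n => φ n x) atTop (nhds (φ₀ x)))
    (hweakgrad : ∀ G : E3 → E3, MemLp G 2 volume →
      Tendsto (fun n => ∫ x : E3, (inner ℝ (gradient (φ n) x) (G x) : ℝ)) atTop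
        (nhds (∫ x : E3, (inner ℝ (gradient φ₀ x) (G x) : ℝ)))) :
    energy f₀ φ₀ ≤ Filter.liminf (fun n => energy (f n) (φ n)) atTop := by
  have hkin : kinE f₀ φ₀ ≤ liminf (fun n => kinE (f n) (φ n)) atTop :=
    kinE_le_liminf_of_weak hk (fun n => (hadm n).1.1) (fun n => (hadm n).1.2.2.2)
      (fun n => (hadm n).2.1.1.continuous.measurable) hf₀Lp hf₀pos hφ₀.1.continuous.measurable
      hweakf haeφ
  have hgrad := lintegral_sq_norm_le_liminf_of_tendsto_integral_inner
    (fun n => (hadm n).2.1.memLp_gradient) hφ₀.memLp_gradient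
    (hweakgrad _ hφ₀.memLp_gradient)
  have hhalf : (∫⁻ x, ENNReal.ofReal (‖gradient φ₀ x‖ ^ 2)) / 2 ≤
      liminf (fun n => (∫⁻ x, ENNReal.ofReal (‖gradient (φ n) x‖ ^ 2)) / 2) atTop :=
    (ENNReal.div_le_div_right hgrad 2).trans_eq <|
      Monotone.map_liminf_of_continuousAt (fun _ _ h => ENNReal.div_le_div_right h 2) _
        (ENNReal.continuous_div_const 2 two_ne_zero).continuousAt
  calc energy f₀ φ₀
      = kinE f₀ φ₀ + (∫⁻ x, ENNReal.ofReal (‖gradient φ₀ x‖ ^ 2)) / 2 := rfl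
    _ ≤ liminf (fun n => kinE (f n) (φ n)) atTop +
          liminf (fun n => (∫⁻ x, ENNReal.ofReal (‖gradient (φ n) x‖ ^ 2)) / 2) atTop :=
        add_le_add hkin hhalf
    _ ≤ liminf (fun n => energy (f n) (φ n)) atTop :=
        ENNReal.le_liminf_add _ _

/-- weak lower semicontinuity of the energy functional along sequences of
admissible pairs: if `fₙ ⇀ f₀` weakly in `L^{1+1/k}`, `φₙ → φ₀` a.e. and
`∇φₙ ⇀ ∇φ₀` weakly in `L²`, with `f₀ ≥ 0` a.e. in `L^{1+1/k}` and `φ₀ ≤ 0` a.e. a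
potential, then `liminf 𝓔(fₙ,φₙ) ≥ 𝓔(f₀,φ₀)`. -/
theorem energy_weakly_lower_semicontinuous (k M J : ℝ)
    (hk : 0 < k) (hk2 : k < 2) (hM : 0 < M) (hJ : 0 < J)
    (f : ℕ → E3 → E3 → ℝ) (φ : ℕ → E3 → ℝ)
    (hadm : ∀ n, Admissible k M J (f n) (φ n))
    (f₀ : E3 → E3 → ℝ) (φ₀ : E3 → ℝ)
    (hf₀meas : Measurable (Function.uncurry f₀))
    (hf₀pos : ∀ᵐ z : E3 × E3, 0 ≤ f₀ z.1 z.2)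
    (hf₀Lp : MemLp (Function.uncurry f₀) (ENNReal.ofReal (1 + 1/k)) volume)
    (hφ₀ : IsPotential φ₀) (hφ₀neg : ∀ᵐ x : E3, φ₀ x ≤ 0)
    (hweakf : ∀ g : E3 × E3 → ℝ, MemLp g (ENNReal.ofReal (1 + k)) volume →
      Tendsto (fun n => ∫ z : E3 × E3, f n z.1 z.2 * g z) atTop
        (nhds (∫ z : E3 × E3, f₀ z.1 z.2 * g z)))
    (haeφ : ∀ᵐ x : E3, Tendsto (fun n => φ n x) atTop (nhds (φ₀ x)))
    (hweakgrad : ∀ G : E3 → E3, MemLp G 2 volume →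
      Tendsto (fun n => ∫ x : E3, (inner ℝ (gradient (φ n) x) (G x) : ℝ)) atTop
        (nhds (∫ x : E3, (inner ℝ (gradient φ₀ x) (G x) : ℝ)))) :
    energy f₀ φ₀ ≤ Filter.liminf (fun n => energy (f n) (φ n)) atTop :=
  energy_weakly_lower_semicontinuous_general k M J hk f φ hadm f₀ φ₀ hf₀pos hf₀Lp hφ₀ hweakf haeφ
    hweakgrad
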